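/- arXiv:2502.20029 — 2 statements merged into one kernel-verified Lean document; each statement's English description precedes it below -/
import Mathlib

section
/- Let P, P' be symmetric n×n matrices, R an m×m symmetric positive definite matrix, B ∈ ℝ^{n×m}, C ∈ ℝ^{n×n}, D ∈ ℝ^{n×m}, such that R + DᵀPD and R + DᵀP'D are invertible. Define K = (R + DᵀPD)^{-1}(BᵀP + DᵀPC) and K' = (R + DᵀP'D)^{-1}(BᵀP' + DᵀP'C). Then K' − K = (R + DᵀP'D)^{-1}(Bᵀ(P'−P) + Dᵀ(P'−P)(C − DK)). -/
open Matrix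

/-- The pivotal Riccati gain-difference identity:
`K' − K = (R + DᵀP'D)⁻¹ (Bᵀ(P'−P) + Dᵀ(P'−P)(C − DK))`. -/
theorem riccati_gain_difference {n m : ℕ}
    (P P' : Matrix (Fin n) (Fin n) ℝ) (hP : Pᵀ = P) (hP' : P'ᵀ = P')
    (R : Matrix (Fin m) (Fin m) ℝ) (hR : R.PosDef)
    (B : Matrix (Fin n) (Fin m) ℝ) (C : Matrix (Fin n) (Fin n) ℝ)
    (D : Matrix (Fin n) (Fin m) ℝ)
    (hinv : IsUnit (R + Dᵀ * P * D)) (hinv' : IsUnit (R + Dᵀ * P' * D)) :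
    let K := (R + Dᵀ * P * D)⁻¹ * (Bᵀ * P + Dᵀ * P * C)
    let K' := (R + Dᵀ * P' * D)⁻¹ * (Bᵀ * P' + Dᵀ * P' * C)
    K' - K = (R + Dᵀ * P' * D)⁻¹ * (Bᵀ * (P' - P) + Dᵀ * (P' - P) * (C - D * K)) := by
  intro K K'
  have hd : IsUnit (R + Dᵀ * P * D).det := (Matrix.isUnit_iff_isUnit_det _).mp hinv
  have hd' : IsUnit (R + Dᵀ * P' * D).det := (Matrix.isUnit_iff_isUnit_det _).mp hinv'
  have hS : (R + Dᵀ * P * D) * K = Bᵀ * P + Dᵀ * P * C :=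
    Matrix.mul_nonsing_inv_cancel_left _ _ hd
  have hS' : (R + Dᵀ * P' * D) * K' = Bᵀ * P' + Dᵀ * P' * C :=
    Matrix.mul_nonsing_inv_cancel_left _ _ hd'
  have e1 : (R + Dᵀ * P' * D) * K = (Bᵀ * P + Dᵀ * P * C) + Dᵀ * (P' - P) * (D * K) := by
    rw [← hS]
    simp only [Matrix.add_mul, Matrix.sub_mul, Matrix.mul_sub, Matrix.mul_add, Matrix.mul_assoc]
    abel
  have key : (R + Dᵀ * P' * D) * (K' - K)
      = Bᵀ * (P' - P) + Dᵀ * (P' - P) * (C - D * K) := by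
    rw [Matrix.mul_sub, hS', e1]
    simp only [Matrix.mul_sub, Matrix.sub_mul, Matrix.mul_add, Matrix.add_mul, Matrix.mul_assoc]
    abel
  calc K' - K = (R + Dᵀ * P' * D)⁻¹ * ((R + Dᵀ * P' * D) * (K' - K)) :=
        (Matrix.nonsing_inv_mul_cancel_left _ _ hd').symm
    _ = _ := by rw [key]
end

section
/- Let A be Hurwitz in ℝ^{n×n}, and suppose a symmetric matrix X ≥ 0 satisfies AᵀX + XA + H₁ − H₂ = 0 where H₁, H₂ are symmetric positive semidefinite. Then Tr(X) ≤ Tr(P_A)·Tr(H₁), where P_A = ∫₀^∞ exp(Aᵀt)·exp(At) dt. -/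
/-!
Let `Q = ∫₀^∞ exp(tA) exp(tA)ᵀ dt`, the Gramian of `Aᵀ`. Since `A` is Hurwitz, `exp(tA)` decays
exponentially, so `Q` converges, is positive semidefinite, has the same trace as `P_A`, and solves
the dual Lyapunov equation `AQ + QAᵀ = -1` (integrate `d/dt (exp(tA) exp(tA)ᵀ)` over `(0, ∞)`).
Pairing this equation with `X` and cycling the trace turns `AᵀX + XA = H₂ - H₁` into
`Tr X = Tr(H₁Q) - Tr(H₂Q)`. The second term is nonnegative, and `Tr(H₁Q) ≤ Tr H₁ · Tr Q` by
Cauchy–Schwarz after writing `H₁ = BᵀB` and `Q = CᵀC`.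

The decay of `exp(tA)` is proved on each generalized eigenspace of `A` over `ℂ`: there
`exp(tA) v = e^{tμ} exp(t(A - μ)) v`, and the second factor is a polynomial in `t`.
-/

open Matrix

/-- `A` is Hurwitz: every complex eigenvalue of `A` has negative real part. -/
def IsHurwitz {n : ℕ} (A : Matrix (Fin n) (Fin n) ℝ) : Prop :=
  ∀ μ ∈ spectrum ℂ (A.map Complex.ofReal), μ.re < 0

open NormedSpace Asymptotics Filter MeasureTheory Set
open scoped Nat Topology

namespace Matrix

section TraceInequalities

variable {ι : Type*} [Fintype ι]

theorem trace_transpose_mul_self {m : Type*} [Fintype m] (D : Matrix m ι ℝ) :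
    (Dᵀ * D).trace = ∑ i, ∑ j, D i j ^ 2 := by
  simp only [trace, diag, mul_apply, transpose_apply, sq]
  exact Finset.sum_comm

open scoped MatrixOrder ComplexOrder in
theorem PosSemidef.trace_mul_nonneg {𝕜 : Type*} [RCLike 𝕜] {M N : Matrix ι ι 𝕜}
    (hM : M.PosSemidef) (hN : N.PosSemidef) : 0 ≤ (M * N).trace := by
  classical
  obtain ⟨B, rfl⟩ := CStarAlgebra.nonneg_iff_eq_star_mul_self.mp hM.nonneg
  rw [mul_assoc, trace_mul_comm]
  exact (hN.mul_mul_conjTranspose_same B).trace_nonneg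

open scoped MatrixOrder in
theorem PosSemidef.trace_mul_le_trace_mul_trace {M N : Matrix ι ι ℝ}
    (hM : M.PosSemidef) (hN : N.PosSemidef) : (M * N).trace ≤ M.trace * N.trace := by
  classical
  obtain ⟨B, rfl⟩ := CStarAlgebra.nonneg_iff_eq_star_mul_self.mp hM.nonneg
  obtain ⟨C, rfl⟩ := CStarAlgebra.nonneg_iff_eq_star_mul_self.mp hN.nonneg
  simp only [star_eq_conjTranspose, conjTranspose_eq_transpose_of_trivial]
  have hcycle : (Bᵀ * B * (Cᵀ * C)).trace = ((B * Cᵀ)ᵀ * (B * Cᵀ)).trace := by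
    simpa [mul_assoc] using trace_mul_comm (Bᵀ * B * Cᵀ) C
  rw [hcycle, trace_transpose_mul_self, trace_transpose_mul_self, trace_transpose_mul_self,
    Finset.sum_mul_sum]
  exact Finset.sum_le_sum fun i _ => Finset.sum_le_sum fun j _ =>
    Finset.sum_mul_sq_le_sq_mul_sq Finset.univ (B i) (C j)

theorem trace_eq_trace_mul_of_lyapunov {R : Type*} [CommRing R] [DecidableEq ι]
    {A X H Q : Matrix ι ι R} (hX : Aᵀ * X + X * A = -H) (hQ : A * Q + Q * Aᵀ = -1) :
    X.trace = (H * Q).trace := by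
  calc X.trace = -((X * (A * Q)).trace + (X * (Q * Aᵀ)).trace) := by
        rw [← trace_add, ← mul_add, hQ, mul_neg_one, trace_neg, neg_neg]
    _ = -((Aᵀ * X + X * A) * Q).trace := by
        rw [add_mul, trace_add, ← mul_assoc X A Q, ← mul_assoc X Q, trace_mul_cycle X Q Aᵀ,
          add_comm]
    _ = (H * Q).trace := by rw [hX, neg_mul, trace_neg, neg_neg]

end TraceInequalities

section EntrywiseIntegral

variable {α : Type*} [MeasurableSpace α] {μ : Measure α} {l m n : Type*} [Fintype m]

theorem integrable_mul_apply {F : α → Matrix m n ℝ} (hF : ∀ i j, Integrable (fun t => F t i j) μ)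
    (M : Matrix l m ℝ) (i : l) (j : n) : Integrable (fun t => (M * F t) i j) μ := by
  simp only [mul_apply]
  exact integrable_finsetSum _ fun k _ => (hF k j).const_mul _

theorem integrable_apply_mul {F : α → Matrix l m ℝ} (hF : ∀ i j, Integrable (fun t => F t i j) μ)
    (M : Matrix m n ℝ) (i : l) (j : n) : Integrable (fun t => (F t * M) i j) μ := by
  simp only [mul_apply]
  exact integrable_finsetSum _ fun k _ => (hF i k).mul_const _

theorem mul_of_integral {F : α → Matrix m n ℝ} (hF : ∀ i j, Integrable (fun t => F t i j) μ)
    (M : Matrix l m ℝ) :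
    M * of (fun i j => ∫ t, F t i j ∂μ) = of fun i j => ∫ t, (M * F t) i j ∂μ := by
  ext i j
  simp only [mul_apply, of_apply, ← integral_const_mul]
  exact (integral_finsetSum _ fun k _ => (hF k j).const_mul _).symm

theorem of_integral_mul {F : α → Matrix l m ℝ} (hF : ∀ i j, Integrable (fun t => F t i j) μ)
    (M : Matrix m n ℝ) :
    of (fun i j => ∫ t, F t i j ∂μ) * M = of fun i j => ∫ t, (F t * M) i j ∂μ := by
  ext i j
  simp only [mul_apply, of_apply, ← integral_mul_const]
  exact (integral_finsetSum _ fun k _ => (hF i k).mul_const _).symm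

theorem trace_of_integral {F : α → Matrix m m ℝ} (hF : ∀ i, Integrable (fun t => F t i i) μ) :
    (of fun i j => ∫ t, F t i j ∂μ).trace = ∫ t, (F t).trace ∂μ :=
  (integral_finsetSum _ fun i _ => hF i).symm

theorem posSemidef_of_integral {F : α → Matrix m m ℝ}
    (hF : ∀ i j, Integrable (fun t => F t i j) μ) (hpos : ∀ t, (F t).PosSemidef) :
    (of fun i j => ∫ t, F t i j ∂μ).PosSemidef := by
  refine .of_dotProduct_mulVec_nonneg ?_ fun x => ?_
  · ext i j
    exact integral_congr_ae (ae_of_all _ fun t => (hpos t).isHermitian.apply i j)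
  · have hquad : star x ⬝ᵥ (of fun i j => ∫ t, F t i j ∂μ) *ᵥ x =
        ∫ t, star x ⬝ᵥ F t *ᵥ x ∂μ := by
      simp only [dotProduct, mulVec, of_apply, Finset.mul_sum, ← integral_mul_const,
        ← integral_const_mul]
      rw [integral_finsetSum _ fun i _ => integrable_finsetSum _ fun j _ =>
        ((hF i j).mul_const _).const_mul _]
      exact Finset.sum_congr rfl fun i _ => (integral_finsetSum _ fun j _ =>
        ((hF i j).mul_const _).const_mul _).symm
    rw [hquad]
    exact integral_nonneg fun t => (hpos t).dotProduct_mulVec_nonneg x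

end EntrywiseIntegral

section Exponential

variable {ι : Type*} [Fintype ι] [DecidableEq ι]

theorem exp_smul_transpose (A : Matrix ι ι ℝ) (t : ℝ) : exp (t • Aᵀ) = (exp (t • A))ᵀ := by
  rw [← transpose_smul, exp_transpose]

open scoped Norms.Operator in
theorem continuous_exp_smul (A : Matrix ι ι ℝ) : Continuous fun t : ℝ => exp (t • A) :=
  exp_continuous.comp (continuous_id.smul continuous_const)

open scoped Norms.Operator in
theorem hasDerivAt_transpose_exp_smul_mul_exp_smul (A : Matrix ι ι ℝ) (t : ℝ) (i j : ι) :
    HasDerivAt (fun s : ℝ => ((exp (s • A))ᵀ * exp (s • A)) i j)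
      ((Aᵀ * ((exp (t • A))ᵀ * exp (t • A)) + (exp (t • A))ᵀ * exp (t • A) * A) i j) t := by
  have hE := hasDerivAt_exp_smul_const (𝕂 := ℝ) A t
  have hET : HasDerivAt (fun s : ℝ => (exp (s • A))ᵀ) ((exp (t • A) * A)ᵀ) t :=
    (transposeLinearEquiv ι ι ℝ ℝ).toLinearMap.toContinuousLinearMap.hasFDerivAt.comp_hasDerivAt
      t hE
  have hF := (entryLinearMap ℝ ℝ i j).toContinuousLinearMap.hasFDerivAt.comp_hasDerivAt t
    (hET.mul hE)
  rw [transpose_mul, mul_assoc Aᵀ, ← mul_assoc (exp (t • A))ᵀ] at hF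
  exact hF

open scoped Norms.Operator in
theorem map_ofReal_exp (A : Matrix ι ι ℝ) :
    (exp A).map Complex.ofReal = exp (A.map Complex.ofReal) :=
  map_exp (Complex.ofRealHom.mapMatrix (m := ι))
    (Continuous.matrix_map continuous_id Complex.continuous_ofReal) A

open scoped Norms.Operator in
theorem exp_smul_one (z : ℂ) : exp (z • (1 : Matrix ι ι ℂ)) = Complex.exp z • 1 := by
  have h := algebraMap_exp_comm (𝔸 := Matrix ι ι ℂ) z
  rw [Algebra.algebraMap_eq_smul_one, Algebra.algebraMap_eq_smul_one, ← Complex.exp_eq_exp_ℂ] at h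
  exact h.symm

open scoped Norms.Operator in
theorem exp_mulVec_eq_sum_of_pow_mulVec_eq_zero {𝕜 : Type*} [RCLike 𝕜] {N : Matrix ι ι 𝕜}
    {v : ι → 𝕜} {k : ℕ} (h : N ^ k *ᵥ v = 0) :
    exp N *ᵥ v = ∑ m ∈ Finset.range k, (m ! : 𝕜)⁻¹ • (N ^ m *ᵥ v) := by
  have hsum := (exp_series_hasSum_exp' (𝕂 := 𝕜) N).mapL
    ((mulVecBilin 𝕜 𝕜).flip v).toContinuousLinearMap
  simp only [LinearMap.coe_toContinuousLinearMap', LinearMap.flip_apply, mulVecBilin_apply,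
    smul_mulVec] at hsum
  refine hsum.unique (hasSum_sum_of_ne_finset_zero fun m hm => ?_)
  rw [← Nat.sub_add_cancel (not_lt.mp (Finset.mem_range.not.mp hm)), pow_add, ← mulVec_mulVec, h,
    mulVec_zero, smul_zero]

end Exponential

section Decay

variable {ι : Type*} [Fintype ι] [DecidableEq ι]

theorem isBigO_exp_smul_mulVec_of_pow_mulVec_eq_zero {N : Matrix ι ι ℂ} {v : ι → ℂ} {k : ℕ}
    (h : N ^ k *ᵥ v = 0) {δ : ℝ} (hδ : 0 < δ) :
    (fun t : ℝ => exp (t • N) *ᵥ v) =O[atTop] fun t => Real.exp (δ * t) := by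
  have hk (t : ℝ) : (t • N) ^ k *ᵥ v = 0 := by rw [smul_pow, smul_mulVec, h, smul_zero]
  simp_rw [exp_mulVec_eq_sum_of_pow_mulVec_eq_zero (hk _), smul_pow, smul_mulVec,
    smul_comm _ (_ ^ _ : ℝ)]
  refine IsBigO.fun_sum fun m _ => ?_
  simpa using (isLittleO_pow_exp_pos_mul_atTop m hδ).isBigO.smul
    (isBigO_const_const ((m ! : ℂ)⁻¹ • (N ^ m *ᵥ v)) (one_ne_zero (α := ℝ)) atTop)

theorem isBigO_exp_smul_mulVec_of_mem_maxGenEigenspace {B : Matrix ι ι ℂ} {c : ℝ}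
    (hB : ∀ μ ∈ spectrum ℂ B, μ.re < -c) {μ : ℂ} {v : ι → ℂ}
    (hv : v ∈ Module.End.maxGenEigenspace (toLin' B) μ) :
    (fun t : ℝ => exp (t • B) *ᵥ v) =O[atTop] fun t => Real.exp (-c * t) := by
  rcases eq_or_ne v 0 with rfl | hv0
  · simp only [mulVec_zero]
    exact isBigO_zero _ _
  have hμ : μ ∈ spectrum ℂ B := by
    rw [← spectrum_toLin']
    exact ((Module.End.HasUnifEigenvector.hasUnifEigenvalue ⟨hv, hv0⟩).lt zero_lt_one).mem_spectrum
  obtain ⟨k, hk⟩ := (Module.End.mem_maxGenEigenspace _ _ _).mp hv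
  have hk' : (B - μ • 1) ^ k *ᵥ v = 0 := by
    rw [← toLin'_apply]
    simpa [toLin'_pow, Module.End.one_eq_id] using hk
  have hsplit (t : ℝ) :
      exp (t • B) *ᵥ v = Complex.exp (t * μ) • (exp (t • (B - μ • 1)) *ᵥ v) := by
    have hcomm : Commute ((t * μ) • (1 : Matrix ι ι ℂ)) (t • (B - μ • 1)) :=
      ((Commute.one_left _).smul_left _).smul_right _
    rw [show t • B = ((t : ℂ) * μ) • (1 : Matrix ι ι ℂ) + t • (B - μ • 1) by module,
      exp_add_of_commute _ _ hcomm, exp_smul_one, smul_mul_assoc, one_mul, smul_mulVec]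
  have hscalar : (fun t : ℝ => Complex.exp (t * μ)) =O[atTop] fun t => Real.exp (μ.re * t) :=
    IsBigO.of_bound 1 (Eventually.of_forall fun t => by simp [Complex.norm_exp, mul_comm])
  simp_rw [hsplit]
  -- `δ = -c - Re μ` makes `e^{t Re μ} e^{δ t} = e^{-c t}`.
  refine (hscalar.smul (isBigO_exp_smul_mulVec_of_pow_mulVec_eq_zero hk' (δ := -c - μ.re)
    (by linarith [hB μ hμ]))).congr_right fun t => ?_
  rw [smul_eq_mul, ← Real.exp_add]
  ring_nf

theorem isBigO_exp_smul_mulVec {B : Matrix ι ι ℂ} {c : ℝ} (hB : ∀ μ ∈ spectrum ℂ B, μ.re < -c)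
    (v : ι → ℂ) : (fun t : ℝ => exp (t • B) *ᵥ v) =O[atTop] fun t => Real.exp (-c * t) := by
  have hv : v ∈ ⨆ μ, Module.End.maxGenEigenspace (toLin' B) μ := by
    rw [Module.End.iSup_maxGenEigenspace_eq_top]
    trivial
  induction hv using Submodule.iSup_induction' with
  | mem μ w hw => exact isBigO_exp_smul_mulVec_of_mem_maxGenEigenspace hB hw
  | zero => simp only [mulVec_zero]; exact isBigO_zero _ _
  | add x y _ _ hx hy => simpa only [mulVec_add] using hx.add hy

end Decay

section Gramian

variable {ι : Type*} [Fintype ι] [DecidableEq ι]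

def IsExpStable (A : Matrix ι ι ℝ) : Prop :=
  ∃ c > 0, ∀ i j, (fun t : ℝ => exp (t • A) i j) =O[atTop] fun t => Real.exp (-c * t)

noncomputable def expGramian (A : Matrix ι ι ℝ) : Matrix ι ι ℝ :=
  of fun i j => ∫ t in Ioi (0 : ℝ), ((exp (t • A))ᵀ * exp (t • A)) i j

variable {A : Matrix ι ι ℝ}

theorem IsExpStable.transpose (hA : A.IsExpStable) : Aᵀ.IsExpStable := by
  obtain ⟨c, hc, h⟩ := hA
  exact ⟨c, hc, fun i j => by simpa only [exp_smul_transpose, transpose_apply] using h j i⟩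

theorem IsExpStable.exists_isBigO_transpose_mul (hA : A.IsExpStable) :
    ∃ b > 0, ∀ i j, (fun t : ℝ => ((exp (t • A))ᵀ * exp (t • A)) i j) =O[atTop]
      fun t => Real.exp (-b * t) := by
  obtain ⟨c, hc, h⟩ := hA
  refine ⟨c + c, by positivity, fun i j => ?_⟩
  simp only [mul_apply, transpose_apply]
  refine IsBigO.fun_sum fun k _ => ((h k i).mul (h k j)).congr_right fun t => ?_
  rw [← Real.exp_add]
  ring_nf

theorem IsExpStable.integrableOn_transpose_mul (hA : A.IsExpStable) (i j : ι) :
    IntegrableOn (fun t : ℝ => ((exp (t • A))ᵀ * exp (t • A)) i j) (Ioi 0) := by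
  obtain ⟨b, hb, h⟩ := hA.exists_isBigO_transpose_mul
  exact integrable_of_isBigO_exp_neg hb
    (((continuous_exp_smul A).matrix_transpose.matrix_mul (continuous_exp_smul A)).matrix_elem
      i j).continuousOn (h i j)

theorem IsExpStable.tendsto_transpose_mul (hA : A.IsExpStable) (i j : ι) :
    Tendsto (fun t : ℝ => ((exp (t • A))ᵀ * exp (t • A)) i j) atTop (𝓝 0) := by
  obtain ⟨b, hb, h⟩ := hA.exists_isBigO_transpose_mul
  exact (h i j).trans_tendsto
    (Real.tendsto_exp_atBot.comp (tendsto_id.const_mul_atTop_of_neg (neg_neg_iff_pos.2 hb)))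

theorem IsExpStable.transpose_mul_expGramian_add_expGramian_mul (hA : A.IsExpStable) :
    Aᵀ * A.expGramian + A.expGramian * A = -1 := by
  have hint := hA.integrableOn_transpose_mul
  rw [expGramian, mul_of_integral hint, of_integral_mul hint]
  ext i j
  rw [add_apply, of_apply, of_apply, ← integral_add (integrable_mul_apply hint _ i j)
    (integrable_apply_mul hint _ i j)]
  have hFTC := integral_Ioi_of_hasDerivAt_of_tendsto'
    (fun t _ => hasDerivAt_transpose_exp_smul_mul_exp_smul A t i j)
    ((integrable_mul_apply hint _ i j).add (integrable_apply_mul hint _ i j))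
    (hA.tendsto_transpose_mul i j)
  simpa using hFTC

theorem IsExpStable.posSemidef_expGramian (hA : A.IsExpStable) : A.expGramian.PosSemidef :=
  posSemidef_of_integral hA.integrableOn_transpose_mul fun t => by
    simpa only [conjTranspose_eq_transpose_of_trivial] using
      posSemidef_conjTranspose_mul_self (exp (t • A))

theorem IsExpStable.trace_expGramian_transpose (hA : A.IsExpStable) :
    Aᵀ.expGramian.trace = A.expGramian.trace := by
  rw [expGramian, expGramian,
    trace_of_integral fun i => hA.transpose.integrableOn_transpose_mul i i,
    trace_of_integral fun i => hA.integrableOn_transpose_mul i i]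
  simp_rw [exp_smul_transpose, transpose_transpose]
  exact integral_congr_ae (ae_of_all _ fun t => trace_mul_comm _ _)

end Gramian

end Matrix

theorem Set.Finite.exists_pos_forall_re_lt_neg {S : Set ℂ} (hS : S.Finite) (h : ∀ μ ∈ S, μ.re < 0) :
    ∃ c > 0, ∀ μ ∈ S, μ.re < -c := by
  rcases S.eq_empty_or_nonempty with rfl | hne
  · exact ⟨1, one_pos, by simp⟩
  obtain ⟨μ₀, hμ₀, hmax⟩ := Set.exists_max_image S Complex.re hS hne
  exact ⟨-μ₀.re / 2, by linarith [h μ₀ hμ₀], fun μ hμ => by linarith [hmax μ hμ, h μ₀ hμ₀]⟩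

theorem IsHurwitz.isExpStable {n : ℕ} {A : Matrix (Fin n) (Fin n) ℝ} (hA : IsHurwitz A) :
    A.IsExpStable := by
  obtain ⟨c, hc, hre⟩ := (Matrix.finite_spectrum _).exists_pos_forall_re_lt_neg hA
  refine ⟨c, hc, fun i j => ?_⟩
  have hentry (t : ℝ) : ((exp (t • A) i j : ℝ) : ℂ) =
      (exp (t • A.map Complex.ofReal) *ᵥ Pi.single j 1) i := by
    have hsmul : t • A.map Complex.ofReal = (t • A).map Complex.ofReal := by
      ext; simp [Complex.real_smul]
    rw [mulVec_single_one, hsmul, ← map_ofReal_exp]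
    rfl
  refine IsBigO.trans (IsBigO.of_bound 1 (Eventually.of_forall fun t => ?_))
    (isBigO_exp_smul_mulVec hre (Pi.single j 1))
  rw [one_mul, ← Complex.norm_real, hentry]
  exact norm_le_pi_norm _ i

theorem trace_bound_lyapunov_general {n : ℕ}
    (A X H₁ H₂ : Matrix (Fin n) (Fin n) ℝ) (hA : IsHurwitz A)
    (hH₁ : H₁.PosSemidef) (hH₂ : H₂.PosSemidef)
    (heq : Aᵀ * X + X * A + H₁ - H₂ = 0) :
    let PA : Matrix (Fin n) (Fin n) ℝ :=
      Matrix.of fun i j => ∫ t in Set.Ioi (0 : ℝ),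
        ((NormedSpace.exp (t • A))ᵀ * NormedSpace.exp (t • A)) i j
    X.trace ≤ PA.trace * H₁.trace := by
  show X.trace ≤ A.expGramian.trace * H₁.trace
  have hAs := hA.isExpStable
  have hAT := hAs.transpose
  set Q := Aᵀ.expGramian
  have hQ : A * Q + Q * Aᵀ = -1 := by
    simpa only [transpose_transpose] using hAT.transpose_mul_expGramian_add_expGramian_mul
  have hQpsd : Q.PosSemidef := hAT.posSemidef_expGramian
  have hX : Aᵀ * X + X * A = -(H₁ - H₂) := by
    rw [neg_sub, ← sub_eq_zero, ← heq]
    abel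
  calc X.trace = ((H₁ - H₂) * Q).trace := trace_eq_trace_mul_of_lyapunov hX hQ
    _ ≤ (H₁ * Q).trace := by
        rw [sub_mul, trace_sub]
        linarith [hH₂.trace_mul_nonneg hQpsd]
    _ ≤ H₁.trace * Q.trace := hH₁.trace_mul_le_trace_mul_trace hQpsd
    _ = A.expGramian.trace * H₁.trace := by
        rw [mul_comm, hAs.trace_expGramian_transpose]

/-- If `A` is Hurwitz and `X ≥ 0` satisfies `AᵀX + XA + H₁ − H₂ = 0` with `H₁, H₂ ≥ 0`,
then `Tr(X) ≤ Tr(P_A)·Tr(H₁)` where `P_A = ∫₀^∞ exp(Aᵀt) exp(At) dt`. -/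
theorem trace_bound_lyapunov {n : ℕ}
    (A X H₁ H₂ : Matrix (Fin n) (Fin n) ℝ) (hA : IsHurwitz A)
    (hX : X.PosSemidef) (hH₁ : H₁.PosSemidef) (hH₂ : H₂.PosSemidef)
    (heq : Aᵀ * X + X * A + H₁ - H₂ = 0) :
    let PA : Matrix (Fin n) (Fin n) ℝ :=
      Matrix.of fun i j => ∫ t in Set.Ioi (0 : ℝ),
        ((NormedSpace.exp (t • A))ᵀ * NormedSpace.exp (t • A)) i j
    X.trace ≤ PA.trace * H₁.trace :=
  trace_bound_lyapunov_general A X H₁ H₂ hA hH₁ hH₂ heq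
end
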